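/- (Dissipation identity) Assume G is conserved by X. If x is a differentiable curve on an interval that solves the geometrically dissipated system, then for every t in that interval the derivative of G∘x at t equals −det(Σ^{(∇F₁(x(t)),…,∇F_k(x(t)),∇G(x(t)))}_{(∇F₁(x(t)),…,∇F_k(x(t)),∇G(x(t)))}), and in particular (G∘x)′(t) ≤ 0. -/

import Mathlib

open scoped RealInnerProductSpace BigOperators
open Filter Topology

/-- `Σ^{(a₁,…,a_r)}_{(b₁,…,b_s)}`: the `r × s` real matrix whose `(i,j)` entry is `⟪b j, a i⟫`. -/
noncomputable def sigmaMat {E : Type*} [NormedAddCommGroup E] [InnerProductSpace ℝ E]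
    {r s : ℕ} (a : Fin r → E) (b : Fin s → E) : Matrix (Fin r) (Fin s) ℝ :=
  Matrix.of fun i j => ⟪b j, a i⟫

/-- The standard control vector `v₀(w₁,…,w_{k+1},u)`: there are `k+1` vectors `w`
(`k+1 ≥ 1` encodes the requirement that the number of `w`-vectors is at least one).
With `0`-indexing, the sign `(-1)^(i+k+1)` below is the paper's `(-1)^{i+k+1}` for
`1`-indexed `i` and `k+1` vectors. -/
noncomputable def stdControl {E : Type*} [NormedAddCommGroup E] [InnerProductSpace ℝ E]
    {k : ℕ} (w : Fin (k + 1) → E) (u : E) : E :=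
  (∑ i : Fin (k + 1),
      ((-1 : ℝ) ^ ((i : ℕ) + k + 1) *
        (sigmaMat w (Fin.snoc (w ∘ i.succAbove) u)).det) • w i) +
    (sigmaMat w w).det • u

/-- The family of gradients `(∇F₁(x),…,∇F_{k+1}(x),∇G(x))`. -/
noncomputable def gradFam {E : Type*} [NormedAddCommGroup E] [InnerProductSpace ℝ E]
    [FiniteDimensional ℝ E] {k : ℕ} (F : Fin (k + 1) → E → ℝ) (G : E → ℝ) (x : E) :
    Fin (k + 1 + 1) → E :=
  Fin.snoc (fun i => gradient (F i) x) (gradient G x)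

/-- The standard control vector field `x ↦ v₀(∇F₁(x),…,∇F_{k+1}(x),∇G(x))`. -/
noncomputable def v0Field {E : Type*} [NormedAddCommGroup E] [InnerProductSpace ℝ E]
    [FiniteDimensional ℝ E] {k : ℕ} (F : Fin (k + 1) → E → ℝ) (G : E → ℝ) (x : E) : E :=
  stdControl (fun i => gradient (F i) x) (gradient G x)

/-- `det Σ^{(∇F₁(x),…,∇F_{k+1}(x),∇G(x))}_{(∇F₁(x),…,∇F_{k+1}(x),∇G(x))}`. -/
noncomputable def gramDetFG {E : Type*} [NormedAddCommGroup E] [InnerProductSpace ℝ E]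
    [FiniteDimensional ℝ E] {k : ℕ} (F : Fin (k + 1) → E → ℝ) (G : E → ℝ) (x : E) : ℝ :=
  (sigmaMat (gradFam F G x) (gradFam F G x)).det

/-- The set `Inv = {x | det Σ^{(∇F(x),∇G(x))}_{(∇F(x),∇G(x))} = 0}`. -/
def invSet {E : Type*} [NormedAddCommGroup E] [InnerProductSpace ℝ E]
    [FiniteDimensional ℝ E] {k : ℕ} (F : Fin (k + 1) → E → ℝ) (G : E → ℝ) : Set E :=
  {x | gramDetFG F G x = 0}

/-! Along a solution, `(G ∘ x)' = ⟪∇G, X - v₀⟫ = -⟪∇G, v₀⟫` because `G` is conserved by `X`.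
The coefficients of `v₀` are exactly the signed cofactors of the last row of the Gram matrix of
`(∇F₁, …, ∇F_k, ∇G)`, so `⟪∇G, v₀⟫` is the Laplace expansion of that Gram determinant, which is
nonnegative since Gram matrices are positive semidefinite. -/

section SigmaMat

variable {E : Type*} [NormedAddCommGroup E] [InnerProductSpace ℝ E]

@[simp]
lemma sigmaMat_apply {r s : ℕ} (a : Fin r → E) (b : Fin s → E) (i : Fin r) (j : Fin s) :
    sigmaMat a b i j = ⟪b j, a i⟫ :=
  rfl

lemma sigmaMat_self_eq_gram {m : ℕ} (c : Fin m → E) : sigmaMat c c = Matrix.gram ℝ c := by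
  ext i j
  exact real_inner_comm _ _

lemma sigmaMat_self_det_nonneg {m : ℕ} (c : Fin m → E) : 0 ≤ (sigmaMat c c).det :=
  sigmaMat_self_eq_gram c ▸ (Matrix.posSemidef_gram ℝ c).det_nonneg

lemma sigmaMat_snoc_submatrix_last_last {k : ℕ} (w : Fin (k + 1) → E) (u' u : E) :
    (sigmaMat (Fin.snoc w u' : Fin (k + 2) → E) (Fin.snoc w u)).submatrix
      (Fin.last _).succAbove (Fin.last _).succAbove = sigmaMat w w := by
  ext i j
  simp [Fin.succAbove_last]

lemma sigmaMat_snoc_submatrix_last_castSucc {k : ℕ} (w : Fin (k + 1) → E) (u' u : E)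
    (i : Fin (k + 1)) :
    (sigmaMat (Fin.snoc w u' : Fin (k + 2) → E) (Fin.snoc w u)).submatrix
      (Fin.last _).succAbove i.castSucc.succAbove =
      sigmaMat w (Fin.snoc (w ∘ i.succAbove) u) := by
  ext i' j'
  simp only [Matrix.submatrix_apply, sigmaMat_apply, Fin.succAbove_last, Fin.snoc_castSucc]
  refine Fin.lastCases ?_ (fun m => ?_) j'
  · rw [Fin.succAbove_castSucc_of_le i (Fin.last k) (Fin.le_last i)]
    simp
  · rw [Fin.castSucc_succAbove_castSucc]
    simp

lemma inner_stdControl {k : ℕ} (w : Fin (k + 1) → E) (u' u : E) :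
    ⟪u', stdControl w u⟫ = (sigmaMat (Fin.snoc w u' : Fin (k + 2) → E) (Fin.snoc w u)).det := by
  rw [Matrix.det_succ_row _ (Fin.last _), Fin.sum_univ_castSucc,
    sigmaMat_snoc_submatrix_last_last, stdControl, inner_add_right, inner_sum,
    real_inner_smul_right]
  simp_rw [sigmaMat_snoc_submatrix_last_castSucc, real_inner_smul_right]
  congr 1
  · refine Finset.sum_congr rfl fun i _ => ?_
    have hsign : (Fin.last (k + 1) : ℕ) + (i.castSucc : ℕ) = i + k + 1 := by
      simp only [Fin.val_last, Fin.val_castSucc]; omega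
    simp only [hsign, sigmaMat_apply, Fin.snoc_last, Fin.snoc_castSucc, real_inner_comm (w i)]
    ring
  · rw [Even.neg_one_pow ⟨_, rfl⟩]
    simp only [sigmaMat_apply, Fin.snoc_last, real_inner_comm u]
    ring

end SigmaMat

theorem HasGradientAt.comp_hasDerivAt {E : Type*} [NormedAddCommGroup E]
    [InnerProductSpace ℝ E] [CompleteSpace E] {f : E → ℝ} {f' : E} {x : ℝ → E} {x' : E}
    {t : ℝ} (hf : HasGradientAt f f' (x t)) (hx : HasDerivAt x x' t) :
    HasDerivAt (fun s => f (x s)) ⟪f', x'⟫ t :=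
  hf.hasFDerivAt.comp_hasDerivAt t hx

section GradientFamily

variable {E : Type*} [NormedAddCommGroup E] [InnerProductSpace ℝ E] [FiniteDimensional ℝ E]
  {k : ℕ} (F : Fin (k + 1) → E → ℝ) (G : E → ℝ) (y : E)

lemma inner_gradient_v0Field : ⟪gradient G y, v0Field F G y⟫ = gramDetFG F G y :=
  inner_stdControl _ _ _

lemma gramDetFG_nonneg : 0 ≤ gramDetFG F G y :=
  sigmaMat_self_det_nonneg _

end GradientFamily

theorem hasDerivAt_G_comp_solution_general {E : Type*} [NormedAddCommGroup E] [InnerProductSpace ℝ E]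
    [FiniteDimensional ℝ E] {k : ℕ} (F : Fin (k + 1) → E → ℝ) (G : E → ℝ) (X : E → E)
    (hG : ContDiff ℝ 1 G)
    (hcons : ∀ y : E, ⟪gradient G y, X y⟫ = 0)
    (I : Set ℝ) (x : ℝ → E)
    (hx : ∀ t ∈ I, HasDerivAt x (X (x t) - v0Field F G (x t)) t) :
    ∀ t ∈ I, HasDerivAt (fun s => G (x s)) (-(gramDetFG F G (x t))) t ∧
      -(gramDetFG F G (x t)) ≤ 0 := by
  intro t ht
  have hGx : HasGradientAt G (gradient G (x t)) (x t) :=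
    (hG.differentiable one_ne_zero (x t)).hasGradientAt
  have hslope : ⟪gradient G (x t), X (x t) - v0Field F G (x t)⟫ = -gramDetFG F G (x t) := by
    rw [inner_sub_right, hcons, inner_gradient_v0Field, zero_sub]
  exact ⟨hslope ▸ hGx.comp_hasDerivAt (hx t ht), neg_nonpos.mpr (gramDetFG_nonneg F G (x t))⟩

/-- dissipation identity: along a solution of the geometrically dissipated
system, the derivative of `G ∘ x` at `t` equals minus the Gram determinant of
`(∇F₁(x t),…,∇F_{k+1}(x t),∇G(x t))`; in particular it is `≤ 0`. -/
theorem hasDerivAt_G_comp_solution {E : Type*} [NormedAddCommGroup E] [InnerProductSpace ℝ E]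
    [FiniteDimensional ℝ E] {k : ℕ} (F : Fin (k + 1) → E → ℝ) (G : E → ℝ) (X : E → E)
    (hF : ∀ i, ContDiff ℝ 1 (F i)) (hG : ContDiff ℝ 1 G)
    (hcons : ∀ y : E, ⟪gradient G y, X y⟫ = 0)
    (I : Set ℝ) (hI : I.OrdConnected) (x : ℝ → E)
    (hx : ∀ t ∈ I, HasDerivAt x (X (x t) - v0Field F G (x t)) t) :
    ∀ t ∈ I, HasDerivAt (fun s => G (x s)) (-(gramDetFG F G (x t))) t ∧
      -(gramDetFG F G (x t)) ≤ 0 :=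
  hasDerivAt_G_comp_solution_general F G X hG hcons I x hx
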